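/- arXiv:1110.4814 — 3 statements merged into one kernel-verified Lean document; each statement's English description precedes it below -/
import Mathlib

section
/- Let p be a prime, h ≥ 1, m, d ≥ 1 integers, 0 ≤ a < d. Then the set { v_p(n^h !) mod m : 0 ≤ n < p^{1/h} + (m-2)d, n ≡ a (mod d) } is a proper subset of Z/mZ, i.e., it does not attain all residues modulo m. -/
/-! Below p^(1/h) we have n^h < p, so v_p((n^h)!) = 0. In the remaining range
p^(1/h) ≤ n < p^(1/h) + (m-2)d there are at most m - 2 integers n ≡ a (mod d). Hence at
most 1 + (m - 2) = m - 1 residues occur. -/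

theorem padicValNat_factorial_eq_zero_of_lt {p k : ℕ} (hp : p.Prime) (hk : k < p) :
    padicValNat p k.factorial = 0 :=
  padicValNat.eq_zero_of_not_dvd fun hdvd => (hp.dvd_factorial.mp hdvd).not_gt hk

theorem rpow_one_div_le_of_le_pow {p n h : ℕ} (hp : 1 < p) (hpn : p ≤ n ^ h) :
    (p : ℝ) ^ ((1 : ℝ) / h) ≤ n := by
  have hh : h ≠ 0 := by
    rintro rfl
    rw [pow_zero] at hpn
    omega
  calc (p : ℝ) ^ ((1 : ℝ) / h) ≤ ((n : ℝ) ^ h) ^ ((h : ℝ)⁻¹) := by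
        rw [one_div]
        exact Real.rpow_le_rpow (Nat.cast_nonneg p) (by exact_mod_cast hpn) (by positivity)
    _ = n := Real.pow_rpow_inv_natCast (Nat.cast_nonneg n) hh

theorem mem_Ico_ceil_of_le_of_lt {x : ℝ} {q k : ℕ} (hxq : x ≤ q) (hqx : (q : ℝ) < x + k) :
    q ∈ Finset.Ico ⌈x⌉₊ (⌈x⌉₊ + k) := by
  refine Finset.mem_Ico.mpr ⟨Nat.ceil_le.mpr hxq, ?_⟩
  have : (q : ℝ) < ⌈x⌉₊ + k := by linarith [Nat.le_ceil x]
  exact_mod_cast this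

theorem card_le_of_mod_eq_of_mem_Ico {s : Finset ℕ} {d a k : ℕ} {c : ℝ}
    (hs : ∀ n ∈ s, n % d = a ∧ c ≤ n ∧ (n : ℝ) < c + k * d) : s.card ≤ k := by
  rcases Nat.eq_zero_or_pos d with rfl | hd
  · rw [Finset.card_eq_zero.mpr]
    · exact Nat.zero_le k
    refine Finset.eq_empty_of_forall_notMem fun n hn => ?_
    obtain ⟨-, hcn, hnc⟩ := hs n hn
    push_cast at hnc
    linarith
  have hdR : (0 : ℝ) < d := by exact_mod_cast hd
  have hdecomp : ∀ n ∈ s, (n : ℝ) = d * (n / d : ℕ) + a := fun n hn => by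
    have := Nat.div_add_mod n d
    rw [(hs n hn).1] at this
    exact_mod_cast this.symm
  have hmaps : ∀ n ∈ s, n / d ∈ Finset.Ico ⌈(c - a) / d⌉₊ (⌈(c - a) / d⌉₊ + k) := by
    intro n hn
    obtain ⟨-, hcn, hnc⟩ := hs n hn
    have hn' := hdecomp n hn
    apply mem_Ico_ceil_of_le_of_lt
    · rw [div_le_iff₀ hdR]
      linarith
    · rw [div_add' _ _ _ hdR.ne', lt_div_iff₀ hdR]
      linarith
  have hinj : Set.InjOn (· / d) s := fun n₁ hn₁ n₂ hn₂ heq => by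
    have e₁ := hdecomp n₁ hn₁
    have e₂ := hdecomp n₂ hn₂
    simp only at heq
    rw [heq] at e₁
    exact_mod_cast e₁.trans e₂.symm
  simpa using Finset.card_le_card_of_injOn _ hmaps hinj

theorem residues_not_all_attained_general (p : ℕ) (hp : p.Prime) (h m d a : ℕ)
    (hm : 2 ≤ m) :
    ∃ r < m, ∀ n : ℕ, n % d = a →
      (n : ℝ) < (p : ℝ) ^ ((1 : ℝ) / h) + ((m : ℝ) - 2) * d →
      padicValNat p (Nat.factorial (n ^ h)) % m ≠ r := by
  set B : ℝ := (p : ℝ) ^ ((1 : ℝ) / h) + ((m : ℝ) - 2) * d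
  set f : ℕ → ℕ := fun n => padicValNat p (n ^ h).factorial % m
  set T := (Finset.range ⌈B⌉₊).filter fun n => n % d = a ∧ (n : ℝ) < B ∧ p ≤ n ^ h
  have hT : T.card ≤ m - 2 := card_le_of_mod_eq_of_mem_Ico fun n hn => by
    obtain ⟨-, hna, hnB, hpn⟩ := Finset.mem_filter.mp hn
    refine ⟨hna, rpow_one_div_le_of_le_pow hp.one_lt hpn, ?_⟩
    rwa [Nat.cast_sub hm, Nat.cast_two]
  have hcard : (insert 0 (T.image f)).card < (Finset.range m).card := by
    have := (Finset.card_insert_le 0 (T.image f)).trans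
      (Nat.add_le_add_right (Finset.card_image_le.trans hT) 1)
    rw [Finset.card_range]
    omega
  obtain ⟨r, hrm, hr⟩ := Finset.exists_mem_notMem_of_card_lt_card hcard
  refine ⟨r, Finset.mem_range.mp hrm, fun n hna hnB hnr => hr ?_⟩
  rw [← hnr]
  by_cases hpn : p ≤ n ^ h
  · have hnT : n ∈ T := Finset.mem_filter.mpr
      ⟨Finset.mem_range.mpr (by exact_mod_cast hnB.trans_le (Nat.le_ceil B)), hna, hnB, hpn⟩
    exact Finset.mem_insert_of_mem (Finset.mem_image_of_mem f hnT)
  · rw [padicValNat_factorial_eq_zero_of_lt hp (not_le.mp hpn), Nat.zero_mod]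
    exact Finset.mem_insert_self 0 _

theorem residues_not_all_attained (p : ℕ) (hp : p.Prime) (h m d a : ℕ)
    (hh : 1 ≤ h) (hm : 2 ≤ m) (hd : 1 ≤ d) (ha : a < d) :
    ∃ r < m, ∀ n : ℕ, n % d = a →
      (n : ℝ) < (p : ℝ) ^ ((1 : ℝ) / h) + ((m : ℝ) - 2) * d →
      padicValNat p (Nat.factorial (n ^ h)) % m ≠ r :=
  residues_not_all_attained_general p hp h m d a hm
end

section
/- Let p be a prime and m ≥ 2. For every residue r with 0 ≤ r < m, there exist infinitely many positive integers n with v_p(n!) ≡ r (mod m). In fact, for k large, v_p((p^k)!) = (p^k - 1)/(p - 1) ≡ (p^k - 1)/(p-1) (mod m) and taking n = c·p^k for suitable c < p yields all residues. -/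
/-!
Write `L e = 1 + p + ⋯ + p ^ (e - 1)`. Then `v_p((p ^ e * a)!) = v_p(a!) + a * L e`, and
`v_p((p ^ e * a + s)!) = v_p((p ^ e * a)!) + v_p(s!)` when `s < p ^ e`. Since
`L (e + 1) = p * L e + 1`, the residues of `L e` mod `m` are eventually periodic, say from `K` on
with period `T`. Putting the base-`p` digits of `x` to the left of those of `y`, at a shift that is
a multiple of `T`, shows that the residues of `v_p((p ^ K * y)!)` are closed under addition. This
submonoid of `ZMod m` contains `c = L K` (from `y = 1`) and `p * c + 1` (from `y = p`), hence `1`,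
hence everything; shifting further to the left gives arbitrarily large `n`.
-/

open Nat Finset Function

theorem Nat.lt_pow_mul {p T : ℕ} (hp : 1 < p) (hT : 0 < T) (n : ℕ) : n < p ^ (n * T) :=
  (Nat.lt_pow_self hp).trans_le (Nat.pow_le_pow_right (by omega) (Nat.le_mul_of_pos_right n hT))

theorem Function.exists_isPeriodicPt_iterate {α : Type*} [Finite α] (f : α → α) (x : α) :
    ∃ K T, 0 < T ∧ IsPeriodicPt f T (f^[K] x) := by
  obtain ⟨i, j, hne, hij⟩ := Finite.exists_ne_map_eq_of_infinite fun n => f^[n] x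
  wlog h : i < j generalizing i j
  · exact this j i hne.symm hij.symm (hne.lt_or_gt.resolve_left h)
  refine ⟨i, j - i, by omega, ?_⟩
  rw [IsPeriodicPt, IsFixedPt, ← iterate_add_apply, Nat.sub_add_cancel h.le]
  exact hij.symm

theorem exists_geom_sum_periodic {R : Type*} [Semiring R] [Finite R] (x : R) :
    ∃ K T, 0 < T ∧ ∀ j, ∑ i ∈ range (j * T + K), x ^ i = ∑ i ∈ range K, x ^ i := by
  have hiter : ∀ e, ∑ i ∈ range e, x ^ i = (fun z => x * z + 1)^[e] 0 := by
    intro e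
    induction e with
    | zero => simp
    | succ e ih => rw [geom_sum_succ, ih, iterate_succ_apply']
  obtain ⟨K, T, hT, hper⟩ := exists_isPeriodicPt_iterate (fun z => x * z + 1) 0
  exact ⟨K, T, hT, fun j => by rw [hiter, hiter, iterate_add_apply, (hper.const_mul j).eq]⟩

theorem ZMod.addSubmonoid_eq_top_of_mem_of_mul_add_one_mem {m : ℕ} [NeZero m]
    (S : AddSubmonoid (ZMod m)) (k : ℕ) {c : ZMod m} (hc : c ∈ S) (hkc : k * c + 1 ∈ S) :
    S = ⊤ := by
  have hone : (1 : ZMod m) ∈ S := by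
    have : (1 : ZMod m) = (k * c + 1) + ((m - 1) * k) • c := by
      rw [nsmul_eq_mul]
      push_cast [Nat.cast_sub (NeZero.one_le : 1 ≤ m)]
      rw [ZMod.natCast_self]
      ring
    rw [this]
    exact S.add_mem hkc (S.nsmul_mem hc _)
  refine eq_top_iff.2 fun t _ => ?_
  simpa using S.nsmul_mem hone t.val

section
variable {p : ℕ} [hp : Fact p.Prime]

theorem padicValNat_factorial_pow_mul_add (e a : ℕ) {s : ℕ} (hs : s < p ^ e) :
    padicValNat p (p ^ e * a + s)! = padicValNat p (p ^ e * a)! + padicValNat p s ! := by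
  induction e generalizing s with
  | zero => simp_all
  | succ e ih =>
    have hp0 := hp.out.pos
    obtain ⟨q, t, ht, rfl⟩ : ∃ q t, t < p ∧ s = p * q + t :=
      ⟨s / p, s % p, Nat.mod_lt s hp0, (Nat.div_add_mod s p).symm⟩
    have hq : q < p ^ e := by
      rw [pow_succ'] at hs
      nlinarith
    have hsplit : p ^ (e + 1) * a + (p * q + t) = p * (p ^ e * a + q) + t := by ring
    rw [hsplit, padicValNat_factorial_mul_add _ ht, padicValNat_factorial_mul_add _ ht,
      padicValNat_factorial_mul, padicValNat_factorial_mul, ih hq, pow_succ', mul_assoc,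
      padicValNat_factorial_mul]
    ring

theorem padicValNat_factorial_pow_mul (e a : ℕ) :
    padicValNat p (p ^ e * a)! = padicValNat p a ! + a * ∑ i ∈ range e, p ^ i := by
  induction e with
  | zero => simp
  | succ e ih =>
    rw [pow_succ', mul_assoc, padicValNat_factorial_mul, ih, sum_range_succ]
    ring

theorem exists_cast_padicValNat_factorial_pow_mul_periodic (m : ℕ) [NeZero m] :
    ∃ K T, 0 < T ∧ ∀ j a,
      (padicValNat p (p ^ (j * T + K) * a)! : ZMod m) = padicValNat p (p ^ K * a)! := by
  obtain ⟨K, T, hT, hper⟩ := exists_geom_sum_periodic (p : ZMod m)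
  refine ⟨K, T, hT, fun j a => ?_⟩
  simp only [padicValNat_factorial_pow_mul, Nat.cast_add, Nat.cast_mul, Nat.cast_sum,
    Nat.cast_pow, hper]

variable {m K T : ℕ}
  (hper : ∀ j a, (padicValNat p (p ^ (j * T + K) * a)! : ZMod m) = padicValNat p (p ^ K * a)!)
include hper

theorem cast_padicValNat_factorial_pow_mul_add (x : ℕ) {j y : ℕ} (hy : y < p ^ (j * T)) :
    (padicValNat p (p ^ K * (p ^ (j * T) * x + y))! : ZMod m) =
      padicValNat p (p ^ K * x)! + padicValNat p (p ^ K * y)! := by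
  have hKy : p ^ K * y < p ^ (j * T + K) := by
    rw [pow_add, mul_comm (p ^ (j * T))]
    exact Nat.mul_lt_mul_of_pos_left hy (pow_pos hp.out.pos K)
  rw [mul_add, ← mul_assoc, ← pow_add, add_comm K, padicValNat_factorial_pow_mul_add _ _ hKy,
    Nat.cast_add, hper]

theorem surjective_cast_padicValNat_factorial_pow_mul [NeZero m] (hT : 0 < T) :
    Surjective fun y => (padicValNat p (p ^ K * y)! : ZMod m) := by
  let S : AddSubmonoid (ZMod m) :=
    { carrier := Set.range fun y => (padicValNat p (p ^ K * y)! : ZMod m)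
      add_mem' := by
        rintro _ _ ⟨x, rfl⟩ ⟨y, rfl⟩
        exact ⟨p ^ (y * T) * x + y,
          cast_padicValNat_factorial_pow_mul_add hper x (Nat.lt_pow_mul hp.out.one_lt hT y)⟩
      zero_mem' := ⟨0, by simp⟩ }
  have hpc : p * (padicValNat p (p ^ K * 1)! : ZMod m) + 1 ∈ S := ⟨p, by
    have hpp : padicValNat p p ! = 1 := by simpa using padicValNat_factorial_mul (p := p) 1
    simp only [padicValNat_factorial_pow_mul, hpp, factorial_one, padicValNat_one_right]
    push_cast
    ring⟩
  have htop := ZMod.addSubmonoid_eq_top_of_mem_of_mul_add_one_mem S p ⟨1, rfl⟩ hpc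
  exact fun t => (AddSubmonoid.eq_top_iff' S).1 htop t

end

theorem valuation_residues_infinite_general (p : ℕ) (hp : p.Prime) (m r : ℕ)
    (hr : r < m) :
    {n : ℕ | padicValNat p (Nat.factorial n) % m = r}.Infinite := by
  have := Fact.mk hp
  have : NeZero m := ⟨by omega⟩
  obtain ⟨K, T, hT, hper⟩ := exists_cast_padicValNat_factorial_pow_mul_periodic (p := p) m
  obtain ⟨y, hy : (padicValNat p (p ^ K * y)! : ZMod m) = r - padicValNat p (p ^ K * 1)!⟩ :=
    surjective_cast_padicValNat_factorial_pow_mul hper hT _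
  refine Set.infinite_of_forall_exists_gt fun N =>
    ⟨p ^ K * (p ^ ((N + y) * T) * 1 + y), ?_, ?_⟩
  · have hy' : y < p ^ ((N + y) * T) :=
      (Nat.le_add_left y N).trans_lt (Nat.lt_pow_mul hp.one_lt hT _)
    rw [Set.mem_ofPred_eq, ← ZMod.val_natCast, cast_padicValNat_factorial_pow_mul_add hper 1 hy',
      hy, add_sub_cancel, ZMod.val_cast_of_lt hr]
  · calc N < p ^ ((N + y) * T) := (Nat.le_add_right N y).trans_lt (Nat.lt_pow_mul hp.one_lt hT _)
      _ ≤ p ^ ((N + y) * T) * 1 + y := by rw [mul_one]; exact Nat.le_add_right _ _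
      _ ≤ p ^ K * (p ^ ((N + y) * T) * 1 + y) := Nat.le_mul_of_pos_left _ (pow_pos hp.pos K)

theorem valuation_residues_infinite (p : ℕ) (hp : p.Prime) (m r : ℕ)
    (hm : 2 ≤ m) (hr : r < m) :
    {n : ℕ | padicValNat p (Nat.factorial n) % m = r}.Infinite :=
  valuation_residues_infinite_general p hp m r hr
end

section
/- Let p be a prime, h ≥ 2, m, d ≥ 1 and 0 ≤ a < d, 0 ≤ r < m. Then there exist infinitely many positive integers n with n ≡ a (mod d) and v_p(n^h !) ≡ r (mod m). -/
/-!
Take `x = p ^ κ` and `n = P(x)` with `P = g X³ + g X² - e X + (g + a)`, where `e = (p - 1) m d`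
and `g = e h 4ʰ`. Since `g` dominates `e`, every coefficient of `Pʰ` of degree at most `3h` other
than the linear one is positive, while the linear one is `-h e (g + a)ʰ⁻¹ < 0`. For large `κ` the
base-`x` digits of `nʰ` are therefore these coefficients, except that the linear digit becomes
`x - w` by borrowing from the quadratic one; as `s_p(x - w) = κ (p - 1) - s_p(w - 1)`, the digit
sum is `s_p(nʰ) = κ (p - 1) + K` for a constant `K`. Legendre's formula
`(p - 1) v_p(N!) = N - s_p(N)` together with `nʰ ≡ aʰ (mod (p - 1) m)` then shows that
`v_p(nʰ!) + κ` is constant modulo `m`, so varying `κ` reaches every residue, while `n ≡ a (mod d)`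
throughout.
-/

open Finset Polynomial

namespace Nat

theorem digits_sum_add_base_pow_mul {b k m : ℕ} (hb : 1 < b) (hm : m < b ^ k) (n : ℕ) :
    (b.digits (m + b ^ k * n)).sum = (b.digits m).sum + (b.digits n).sum := by
  rcases n.eq_zero_or_pos with rfl | hn
  · simp
  obtain ⟨j, rfl⟩ := Nat.exists_eq_add_of_le ((digits_length_le_iff hb m).mpr hm)
  rw [← digits_append_zeroes_append_digits hb hn]
  simp

theorem digits_sum_of_lt {b m : ℕ} (hm : m < b) : (b.digits m).sum = m := by
  rcases m.eq_zero_or_pos with rfl | hm0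
  · simp
  · simp [digits_of_lt b m hm0.ne' hm]

theorem digits_sum_sum_mul_pow {b k : ℕ} (hb : 1 < b) :
    ∀ (L : ℕ) (f : ℕ → ℕ), (∀ t < L, f t < b ^ k) →
      (b.digits (∑ t ∈ range L, f t * (b ^ k) ^ t)).sum = ∑ t ∈ range L, (b.digits (f t)).sum
  | 0, _, _ => by simp
  | L + 1, f, hf => by
    have hsum : ∑ t ∈ range (L + 1), f t * (b ^ k) ^ t
        = f 0 + b ^ k * ∑ t ∈ range L, f (t + 1) * (b ^ k) ^ t := by
      rw [sum_range_succ', mul_sum, add_comm, pow_zero, mul_one]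
      exact congrArg _ (sum_congr rfl fun t _ => by ring)
    rw [hsum, digits_sum_add_base_pow_mul hb (hf 0 L.succ_pos),
      digits_sum_sum_mul_pow hb L (fun t => f (t + 1)) (fun t ht => hf _ (by omega)),
      sum_range_succ' _ L, add_comm]

theorem digits_sum_add_base_mul {b m : ℕ} (hb : 1 < b) (hm : m < b) (n : ℕ) :
    (b.digits (m + b * n)).sum = m + (b.digits n).sum := by
  simpa [digits_sum_of_lt hm] using digits_sum_add_base_pow_mul hb (k := 1) (m := m)
    (by rwa [pow_one]) n

theorem digits_sum_add_digits_sum_pow_sub {b : ℕ} (hb : 1 < b) :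
    ∀ (k y : ℕ), y < b ^ k → (b.digits y).sum + (b.digits (b ^ k - 1 - y)).sum = k * (b - 1)
  | 0, y, hy => by simp_all
  | k + 1, y, hy => by
    have hq : y / b < b ^ k := by
      rw [Nat.div_lt_iff_lt_mul (by omega), ← pow_succ]; exact hy
    have hr : y % b < b := Nat.mod_lt _ (by omega)
    have hy' := (Nat.mod_add_div y b).symm
    have hcompl : b ^ (k + 1) - 1 - y = (b - 1 - y % b) + b * (b ^ k - 1 - y / b) := by
      obtain ⟨u, hu⟩ := Nat.exists_eq_add_of_lt hq
      have : b ^ (k + 1) = b * (y / b) + b + b * u := by rw [pow_succ, hu]; ring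
      rw [hu, Nat.add_sub_cancel, Nat.add_sub_cancel_left, this]
      omega
    rw [hcompl, digits_sum_add_base_mul hb (by omega), hy', digits_sum_add_base_mul hb hr, ← hy',
      add_mul, one_mul, ← digits_sum_add_digits_sum_pow_sub hb k (y / b) hq]
    omega

end Nat

/-- The base-`x` digits of `F.eval x` when `F` has a single negative coefficient, the linear one,
which borrows from the quadratic one. -/
def borrowDigits (F : ℤ[X]) (x t : ℕ) : ℕ :=
  if t = 1 then x - (-F.coeff 1).toNat else (F.coeff t).toNat - if t = 2 then 1 else 0

theorem eval_eq_sum_borrowDigits {F : ℤ[X]} (hF : ∀ t ≠ 1, 0 ≤ F.coeff t) (h1 : F.coeff 1 ≤ 0)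
    (h2 : 0 < F.coeff 2) {x : ℕ} (hx : (-F.coeff 1).toNat ≤ x) :
    F.eval (x : ℤ) = ∑ t ∈ range (F.natDegree + 1), (borrowDigits F x t : ℤ) * (x : ℤ) ^ t := by
  have hdigit : ∀ t, (borrowDigits F x t : ℤ) * (x : ℤ) ^ t = F.coeff t * (x : ℤ) ^ t
      + (if t = 1 then (x : ℤ) ^ 2 else 0) - (if t = 2 then (x : ℤ) ^ 2 else 0) := by
    intro t
    by_cases ht1 : t = 1
    · subst ht1
      have : ((-F.coeff 1).toNat : ℤ) = -F.coeff 1 := Int.toNat_of_nonneg (neg_nonneg.mpr h1)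
      simp only [borrowDigits, if_true]
      push_cast [hx, this]
      ring
    · by_cases ht2 : t = 2
      · subst ht2
        simp only [borrowDigits]
        push_cast [show 1 ≤ (F.coeff 2).toNat by omega]
        rw [Int.toNat_of_nonneg h2.le]
        ring
      · simp only [borrowDigits, ht1, ht2, if_false]
        rw [Nat.sub_zero, Int.toNat_of_nonneg (hF t ht1)]
        ring
  have hmem : ∀ i, i ≤ 2 → i ∈ range (F.natDegree + 1) :=
    fun i hi => mem_range.mpr (by have := le_natDegree_of_ne_zero h2.ne'; omega)
  rw [eval_eq_sum_range]
  simp only [hdigit, sum_sub_distrib, sum_add_distrib, sum_ite_eq', if_pos (hmem 1 (by norm_num)),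
    if_pos (hmem 2 (by norm_num))]
  ring

theorem exists_digits_sum_eval_base_pow {b : ℕ} (hb : 1 < b) (F : ℤ[X])
    (hF : ∀ t ≠ 1, 0 ≤ F.coeff t) (h1 : F.coeff 1 < 0) (h2 : 0 < F.coeff 2) :
    ∃ K : ℤ, ∃ κ₀ : ℕ, ∀ κ ≥ κ₀, ∀ N : ℕ, (N : ℤ) = F.eval ((b : ℤ) ^ κ) →
      ((b.digits N).sum : ℤ) = κ * ((b : ℤ) - 1) + K := by
  set L := F.natDegree + 1
  have hL : 1 < L := Nat.lt_succ_of_le ((by norm_num : 1 ≤ 2).trans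
    (le_natDegree_of_ne_zero h2.ne'))
  set w := (-F.coeff 1).toNat
  refine ⟨∑ t ∈ range L, ((b.digits (borrowDigits F 0 t)).sum : ℤ) - (b.digits (w - 1)).sum,
    ∑ t ∈ range L, (F.coeff t).natAbs, fun κ hκ N hN => ?_⟩
  set x := b ^ κ
  have hcoeff_lt : ∀ t < L, (F.coeff t).natAbs < x := fun t ht =>
    calc (F.coeff t).natAbs ≤ κ := (single_le_sum (by simp) (mem_range.mpr ht)).trans hκ
      _ < x := Nat.lt_pow_self hb
  have hwx : w < x := by have := hcoeff_lt 1 hL; omega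
  have hdigit_lt : ∀ t < L, borrowDigits F x t < x := by
    intro t ht
    have := hcoeff_lt t ht
    simp only [borrowDigits]
    split_ifs <;> omega
  have hN_digits : N = ∑ t ∈ range L, borrowDigits F x t * x ^ t := by
    zify
    rw [hN, show (b : ℤ) ^ κ = (x : ℤ) by simp [x], eval_eq_sum_borrowDigits hF h1.le h2 hwx.le]
  have hdigit_sum : ∀ t, (b.digits (borrowDigits F x t)).sum
      = (b.digits (borrowDigits F 0 t)).sum + if t = 1 then (b.digits (x - w)).sum else 0 := by
    intro t
    by_cases ht1 : t = 1 <;> simp [borrowDigits, ht1, w]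
  have hcompl := Nat.digits_sum_add_digits_sum_pow_sub hb κ (w - 1) (by omega)
  rw [show b ^ κ - 1 - (w - 1) = x - w by omega] at hcompl
  rw [hN_digits, Nat.digits_sum_sum_mul_pow hb L _ hdigit_lt]
  simp only [hdigit_sum, sum_add_distrib, sum_ite_eq', if_pos (mem_range.mpr hL)]
  have hcompl_cast := congrArg (Nat.cast : ℕ → ℤ) hcompl
  rw [Nat.cast_add, Nat.cast_mul, Nat.cast_sub hb.le, Nat.cast_one] at hcompl_cast
  rw [Nat.cast_add, Nat.cast_sum]
  linarith

theorem Polynomial.coeff_le_eval_one (F : ℕ[X]) (t : ℕ) : F.coeff t ≤ F.eval 1 := by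
  rw [eval_eq_sum_range]
  rcases lt_or_ge t (F.natDegree + 1) with ht | ht
  · simpa using single_le_sum (f := fun i => F.coeff i * 1 ^ i) (by simp) (mem_range.mpr ht)
  · simp [coeff_eq_zero_of_natDegree_lt (Nat.lt_of_succ_le ht)]

theorem Polynomial.coeff_one_pow {R : Type*} [CommSemiring R] (F : R[X]) (n : ℕ) :
    (F ^ n).coeff 1 = n * F.coeff 1 * F.coeff 0 ^ (n - 1) := by
  rw [← coeff_coe, coe_pow, PowerSeries.coeff_one_pow, coeff_coe, constantCoeff_coe]

theorem coeff_pow_map_sub_C_mul_X_ge (Q : ℕ[X]) (e h t : ℕ) :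
    ((Q ^ h).coeff t : ℤ) - (((Q.eval 1 : ℕ) + e : ℤ) ^ h - ((Q.eval 1 : ℕ) : ℤ) ^ h)
      ≤ ((Q.map (Nat.castRingHom ℤ) - C (e : ℤ) * X) ^ h).coeff t := by
  set B : ℤ := ((Q.eval 1 : ℕ) : ℤ)
  have hexpand : (Q.map (Nat.castRingHom ℤ) - C (e : ℤ) * X) ^ h = ∑ j ∈ range (h + 1),
      C ((-(e : ℤ)) ^ j * h.choose j) * (X ^ j * (Q ^ (h - j)).map (Nat.castRingHom ℤ)) := by
    rw [sub_eq_neg_add, add_pow]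
    refine sum_congr rfl fun j _ => ?_
    simp only [Polynomial.map_pow, C_mul, C_pow, C_neg, map_natCast]
    ring
  have hterm : ∀ j ∈ range h, -((e : ℤ) ^ (j + 1) * h.choose (j + 1) * B ^ (h - (j + 1)))
      ≤ (-(e : ℤ)) ^ (j + 1) * h.choose (j + 1)
        * (if j + 1 ≤ t then ((Q ^ (h - (j + 1))).coeff (t - (j + 1)) : ℤ) else 0) := by
    intro j _
    set q : ℤ := if j + 1 ≤ t then ((Q ^ (h - (j + 1))).coeff (t - (j + 1)) : ℤ) else 0
    have hq : 0 ≤ q ∧ q ≤ B ^ (h - (j + 1)) := by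
      have hle := coeff_le_eval_one (Q ^ (h - (j + 1))) (t - (j + 1))
      rw [eval_pow] at hle
      simp only [q]
      split_ifs
      · exact ⟨by positivity, by simp only [B]; exact_mod_cast hle⟩
      · exact ⟨le_rfl, by positivity⟩
    have hpos : 0 ≤ (e : ℤ) ^ (j + 1) * h.choose (j + 1) := by positivity
    rw [neg_pow, mul_assoc ((-1) ^ (j + 1))]
    rcases neg_one_pow_eq_or ℤ (j + 1) with h1 | h1 <;> rw [h1] <;> nlinarith
  have hbinom : ∑ j ∈ range h, (e : ℤ) ^ (j + 1) * h.choose (j + 1) * B ^ (h - (j + 1))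
      = (B + e) ^ h - B ^ h := by
    rw [add_comm B, add_pow, sum_range_succ']
    simp only [pow_zero, one_mul, Nat.choose_zero_right, Nat.cast_one, mul_one, Nat.sub_zero]
    rw [add_sub_cancel_right]
    exact sum_congr rfl fun j _ => by ring
  rw [hexpand, finsetSum_coeff, sum_range_succ']
  simp only [coeff_C_mul, coeff_X_pow_mul', coeff_map, eq_natCast, pow_zero, one_mul,
    Nat.choose_zero_right, Nat.cast_one, Nat.sub_zero]
  have := sum_le_sum hterm
  rw [sum_neg_distrib, hbinom] at this
  linarith

noncomputable def cubicPoly (c g : ℕ) : ℕ[X] := C c + C g * X ^ 2 + C g * X ^ 3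

noncomputable def perturbedCubic (c g e : ℕ) : ℤ[X] :=
  (cubicPoly c g).map (Nat.castRingHom ℤ) - C (e : ℤ) * X

theorem eval_one_cubicPoly (c g : ℕ) : (cubicPoly c g).eval 1 = c + 2 * g := by
  simp [cubicPoly, two_mul, add_assoc]

theorem le_coeff_cubicPoly_pow {c g : ℕ} (hgc : g ≤ c) :
    ∀ s t, t ≤ 3 * s → t ≠ 1 → g ^ s ≤ ((cubicPoly c g) ^ s).coeff t
  | 0, t, ht, _ => by simp [show t = 0 by omega]
  | s + 1, t, ht, ht1 => by
    have ih := le_coeff_cubicPoly_pow hgc s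
    have hcoeff : ((cubicPoly c g) ^ (s + 1)).coeff t = ((cubicPoly c g) ^ s).coeff t * c
        + (if 2 ≤ t then ((cubicPoly c g) ^ s).coeff (t - 2) * g else 0)
        + (if 3 ≤ t then ((cubicPoly c g) ^ s).coeff (t - 3) * g else 0) := by
      rw [pow_succ, cubicPoly, mul_add, mul_add, ← mul_assoc, ← mul_assoc, coeff_add, coeff_add,
        coeff_mul_C, coeff_mul_X_pow', coeff_mul_X_pow', coeff_mul_C, coeff_mul_C]
    rw [hcoeff, pow_succ]
    rcases (by omega : t = 0 ∨ t = 2 ∨ t = 4 ∨ (3 ≤ t ∧ t ≠ 4)) with rfl | rfl | rfl | ⟨h3, h4⟩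
    · simpa using Nat.mul_le_mul (ih 0 (by omega) (by omega)) hgc
    · simpa using le_add_left (Nat.mul_le_mul (ih 0 (by omega) (by omega)) le_rfl)
    · simpa using le_add_right (le_add_left (Nat.mul_le_mul (ih 2 (by omega) (by omega)) le_rfl))
    · simpa [h3] using le_add_left (Nat.mul_le_mul (ih (t - 3) (by omega) (by omega)) le_rfl)

theorem natDegree_perturbedCubic_le (c g e : ℕ) : (perturbedCubic c g e).natDegree ≤ 3 := by
  unfold perturbedCubic cubicPoly
  simp only [Polynomial.map_add, Polynomial.map_mul, Polynomial.map_pow, map_X, map_C]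
  compute_degree

theorem coeff_one_perturbedCubic_pow_neg {c g e h : ℕ} (hc : 0 < c) (he : 0 < e) (hh : 0 < h) :
    ((perturbedCubic c g e) ^ h).coeff 1 < 0 := by
  have h0 : (perturbedCubic c g e).coeff 0 = c := by simp [perturbedCubic, cubicPoly]
  have h1 : (perturbedCubic c g e).coeff 1 = -e := by simp [perturbedCubic, cubicPoly]
  have : (0 : ℤ) < h * e * c ^ (h - 1) := by positivity
  rw [coeff_one_pow, h0, h1]
  linarith

theorem add_pow_succ_le (B e : ℕ) :
    ∀ k, (B + e) ^ (k + 1) ≤ B ^ (k + 1) + (k + 1) * e * (B + e) ^ k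
  | 0 => by simp
  | k + 1 => by
    have ih := add_pow_succ_le B e k
    calc (B + e) ^ (k + 2) = (B + e) ^ (k + 1) * B + (B + e) ^ (k + 1) * e := by ring
      _ ≤ (B ^ (k + 1) + (k + 1) * e * (B + e) ^ k) * B + (B + e) ^ (k + 1) * e := by gcongr
      _ = B ^ (k + 2) + (k + 1) * e * ((B + e) ^ k * B) + (B + e) ^ (k + 1) * e := by ring
      _ ≤ B ^ (k + 2) + (k + 1) * e * ((B + e) ^ k * (B + e)) + (B + e) ^ (k + 1) * e := by
        gcongr; exact Nat.le_add_right B e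
      _ = B ^ (k + 2) + (k + 2) * e * (B + e) ^ (k + 1) := by ring

theorem add_pow_lt_pow_add_pow {B e g h : ℕ} (he : 1 ≤ e) (hh : 1 ≤ h) (hB : B + e ≤ 4 * g)
    (hg : e * h * 4 ^ h ≤ g) : (B + e) ^ h < B ^ h + g ^ h := by
  obtain ⟨k, rfl⟩ := Nat.exists_eq_add_of_le' hh
  have hg4 : (k + 1) * e * 4 ^ k < g := by
    calc (k + 1) * e * 4 ^ k < (k + 1) * e * 4 ^ k * 4 := by
          have : 0 < (k + 1) * e * 4 ^ k := by positivity
          omega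
      _ = e * (k + 1) * 4 ^ (k + 1) := by ring
      _ ≤ g := hg
  calc (B + e) ^ (k + 1) ≤ B ^ (k + 1) + (k + 1) * e * (B + e) ^ k := add_pow_succ_le B e k
    _ ≤ B ^ (k + 1) + (k + 1) * e * 4 ^ k * g ^ k := by
        rw [mul_assoc _ (4 ^ k), ← mul_pow]; gcongr
    _ < B ^ (k + 1) + g ^ (k + 1) := by
        rw [pow_succ' g]
        gcongr
        exact pow_pos (by omega) k

theorem coeff_perturbedCubic_pow_pos {c g e h t : ℕ} (hgc : g ≤ c)
    (hdom : (c + 2 * g + e) ^ h < (c + 2 * g) ^ h + g ^ h) (ht : t ≤ 3 * h) (ht1 : t ≠ 1) :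
    0 < ((perturbedCubic c g e) ^ h).coeff t := by
  have hlow := coeff_pow_map_sub_C_mul_X_ge (cubicPoly c g) e h t
  have hmain : (g : ℤ) ^ h ≤ ((cubicPoly c g ^ h).coeff t : ℤ) := by
    exact_mod_cast le_coeff_cubicPoly_pow hgc h t ht ht1
  have hdom' : ((c + 2 * g + e : ℕ) : ℤ) ^ h < ((c + 2 * g : ℕ) : ℤ) ^ h + (g : ℤ) ^ h := by
    exact_mod_cast hdom
  rw [eval_one_cubicPoly] at hlow
  unfold perturbedCubic
  push_cast at hlow hdom'
  linarith

theorem coeff_perturbedCubic_pow_nonneg {c g e h t : ℕ} (hgc : g ≤ c)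
    (hdom : (c + 2 * g + e) ^ h < (c + 2 * g) ^ h + g ^ h) (ht1 : t ≠ 1) :
    0 ≤ ((perturbedCubic c g e) ^ h).coeff t := by
  rcases le_or_gt t (3 * h) with ht | ht
  · exact (coeff_perturbedCubic_pow_pos hgc hdom ht ht1).le
  · rw [coeff_eq_zero_of_natDegree_lt]
    exact (natDegree_pow_le_of_le h (natDegree_perturbedCubic_le c g e)).trans_lt (by omega)

theorem eval_perturbedCubic (c g e : ℕ) (x : ℤ) :
    (perturbedCubic c g e).eval x = c + g * x ^ 2 + g * x ^ 3 - e * x := by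
  simp [perturbedCubic, cubicPoly]

theorem lt_eval_perturbedCubic {c g e : ℕ} (hg : 1 ≤ g) (hgc : g ≤ c) (heg : e ≤ g) (x : ℕ) :
    (x : ℤ) < (perturbedCubic c g e).eval (x : ℤ) := by
  rw [eval_perturbedCubic]
  have hg' : (1 : ℤ) ≤ g := by exact_mod_cast hg
  have hc' : (1 : ℤ) ≤ c := by exact_mod_cast hg.trans hgc
  rcases x.eq_zero_or_pos with rfl | hx
  · simpa using Nat.succ_le_iff.mp (hg.trans hgc)
  have hx' : (1 : ℤ) ≤ x := by exact_mod_cast hx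
  have hex : (e : ℤ) * x ≤ g * x ^ 2 := by
    calc (e : ℤ) * x ≤ g * x := by gcongr
      _ ≤ g * x ^ 2 := by gcongr; nlinarith
  have hx3 : (x : ℤ) ≤ g * x ^ 3 :=
    calc (x : ℤ) ≤ x ^ 3 := le_self_pow₀ hx' (by norm_num)
      _ ≤ g * x ^ 3 := le_mul_of_one_le_left (by positivity) hg'
  linarith

noncomputable def witnessPoly (e h a : ℕ) : ℤ[X] :=
  perturbedCubic (e * h * 4 ^ h + a) (e * h * 4 ^ h) e

theorem exists_digits_sum_eval_witnessPoly_pow {b e h a : ℕ} (hb : 1 < b) (ha : a < e)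
    (hh : 1 ≤ h) :
    ∃ K : ℤ, ∃ κ₀ : ℕ, ∀ κ ≥ κ₀, ∀ N : ℕ, (N : ℤ) = ((witnessPoly e h a) ^ h).eval ((b : ℤ) ^ κ) →
      ((b.digits N).sum : ℤ) = κ * ((b : ℤ) - 1) + K := by
  set g := e * h * 4 ^ h
  have hge : 2 * e ≤ g :=
    calc 2 * e ≤ e * (h * 4 ^ h) := by
          rw [mul_comm 2]
          exact Nat.mul_le_mul_left e (by nlinarith [Nat.le_self_pow (by omega : h ≠ 0) 4])
      _ = g := by ring
  have hdom : (g + a + 2 * g + e) ^ h < (g + a + 2 * g) ^ h + g ^ h :=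
    add_pow_lt_pow_add_pow (by omega) hh (by omega) le_rfl
  exact exists_digits_sum_eval_base_pow hb _
    (fun t ht => coeff_perturbedCubic_pow_nonneg (Nat.le_add_right g a) hdom ht)
    (coeff_one_perturbedCubic_pow_neg (by omega) (by omega) hh)
    (coeff_perturbedCubic_pow_pos (Nat.le_add_right g a) hdom (by omega) (by omega))

theorem lt_eval_witnessPoly {e h : ℕ} (a : ℕ) (he : 1 ≤ e) (hh : 1 ≤ h) (x : ℕ) :
    (x : ℤ) < (witnessPoly e h a).eval (x : ℤ) := by
  have : e ≤ e * h * 4 ^ h := Nat.le_mul_of_pos_right _ (by positivity) |>.trans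
    (Nat.le_mul_of_pos_right _ (by positivity))
  exact lt_eval_perturbedCubic (by omega) (Nat.le_add_right _ a) this x

theorem eval_witnessPoly_modEq (e h a : ℕ) (x : ℤ) : (witnessPoly e h a).eval x ≡ a [ZMOD e] := by
  rw [witnessPoly, eval_perturbedCubic, Int.modEq_iff_dvd]
  exact ⟨-(h * 4 ^ h * (1 + x ^ 2 + x ^ 3) - x), by push_cast; ring⟩

theorem exists_ge_natCast_modEq {m : ℕ} (hm : 0 < m) (B : ℕ) (z : ℤ) :
    ∃ κ ≥ B, (κ : ℤ) ≡ z [ZMOD m] := by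
  refine ⟨B + ((z - B) % m).toNat, le_add_right le_rfl, ?_⟩
  rw [Nat.cast_add, Int.toNat_of_nonneg (Int.emod_nonneg _ (by omega))]
  simpa using ((Int.mod_modEq (z - B) m).add_left (B : ℤ))

theorem exists_ge_padicValNat_factorial_mod_eq {p : ℕ} [hp : Fact p.Prime] {m r : ℕ} (hr : r < m)
    {N : ℕ → ℕ} {A K : ℤ} {κ₀ : ℕ} (hN : ∀ κ, (N κ : ℤ) ≡ A [ZMOD ((p : ℤ) - 1) * m])
    (hs : ∀ κ ≥ κ₀, ((p.digits (N κ)).sum : ℤ) = κ * ((p : ℤ) - 1) + K) (B : ℕ) :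
    ∃ κ ≥ B, padicValNat p (N κ).factorial % m = r := by
  set v : ℕ → ℤ := fun κ => padicValNat p (N κ).factorial
  have hp1 : (p : ℤ) - 1 ≠ 0 := by have := hp.out.two_le; omega
  have hlegendre : ∀ κ ≥ κ₀, ((p : ℤ) - 1) * (v κ + κ) = N κ - K := by
    intro κ hκ
    have := congrArg (Nat.cast : ℕ → ℤ) (sub_one_mul_padicValNat_factorial (p := p) (N κ))
    rw [Nat.cast_mul, Nat.cast_sub (Nat.digit_sum_le p (N κ)), Nat.cast_sub hp.out.one_le,
      Nat.cast_one] at this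
    linarith [hs κ hκ]
  have hcong : ∀ κ ≥ κ₀, v κ + κ ≡ v κ₀ + κ₀ [ZMOD m] := by
    intro κ hκ
    apply Int.ModEq.mul_left_cancel' hp1
    rw [hlegendre κ hκ, hlegendre κ₀ le_rfl]
    exact ((hN κ).trans (hN κ₀).symm).sub_right K
  obtain ⟨κ, hκ, hκr⟩ := exists_ge_natCast_modEq (m := m) (by omega) (max B κ₀) (v κ₀ + κ₀ - r)
  refine ⟨κ, le_of_max_le_left hκ, ?_⟩
  have hv : v κ ≡ r [ZMOD m] := by simpa using (hcong κ (le_of_max_le_right hκ)).sub hκr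
  rw [Int.natCast_modEq_iff] at hv
  rw [hv, Nat.mod_eq_of_lt hr]

theorem theorem2_qualitative_general (p : ℕ) (hp : p.Prime) (h m d a r : ℕ)
    (hh : 2 ≤ h) (ha : a < d) (hr : r < m) :
    {n : ℕ | 0 < n ∧ n % d = a ∧ padicValNat p (Nat.factorial (n ^ h)) % m = r}.Infinite := by
  have := Fact.mk hp
  set e := (p - 1) * m * d
  have hde : d ∣ e := Dvd.intro_left _ rfl
  have he : 0 < e := Nat.mul_pos (Nat.mul_pos (by have := hp.two_le; omega) (by omega)) (by omega)
  have hae : a < e := ha.trans_le (Nat.le_of_dvd he hde)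
  set F := witnessPoly e h a
  obtain ⟨K, κ₀, hK⟩ := exists_digits_sum_eval_witnessPoly_pow (h := h) hp.one_lt hae (by omega)
  have hlt : ∀ κ : ℕ, (κ : ℤ) < F.eval ((p : ℤ) ^ κ) := fun κ =>
    calc (κ : ℤ) < (p ^ κ : ℕ) := by exact_mod_cast Nat.lt_pow_self hp.one_lt
      _ < F.eval ((p ^ κ : ℕ) : ℤ) := lt_eval_witnessPoly a he (by omega) _
      _ = F.eval ((p : ℤ) ^ κ) := by push_cast; rfl
  set n : ℕ → ℕ := fun κ => (F.eval ((p : ℤ) ^ κ)).toNat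
  have hn : ∀ κ, (n κ : ℤ) = F.eval ((p : ℤ) ^ κ) := fun κ =>
    Int.toNat_of_nonneg ((Nat.cast_nonneg κ).trans (hlt κ).le)
  have hmod : ∀ κ, (n κ : ℤ) ≡ a [ZMOD e] := fun κ => hn κ ▸ eval_witnessPoly_modEq e h a _
  refine Set.infinite_of_forall_exists_gt fun B => ?_
  obtain ⟨κ, hκB, hκ⟩ := exists_ge_padicValNat_factorial_mod_eq hr (N := fun κ => n κ ^ h)
    (fun κ => ((hmod κ).pow h).of_dvd ⟨d, by simp [e, Nat.cast_sub hp.one_le]⟩)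
    (fun κ hκ => hK κ hκ _ (by rw [eval_pow, ← hn, Nat.cast_pow])) (B + 1)
  have hnd : n κ % d = a % d :=
    Int.natCast_modEq_iff.mp ((hmod κ).of_dvd (Int.natCast_dvd_natCast.mpr hde))
  have := hlt κ
  rw [← hn] at this
  exact ⟨n κ, ⟨by omega, hnd.trans (Nat.mod_eq_of_lt ha), hκ⟩, by omega⟩

theorem theorem2_qualitative (p : ℕ) (hp : p.Prime) (h m d a r : ℕ)
    (hh : 2 ≤ h) (hm : 1 ≤ m) (hd : 1 ≤ d) (ha : a < d) (hr : r < m) :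
    {n : ℕ | 0 < n ∧ n % d = a ∧ padicValNat p (Nat.factorial (n ^ h)) % m = r}.Infinite :=
  theorem2_qualitative_general p hp h m d a r hh ha hr
end
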